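/- Let T be a tree with vertex set V = {1,2,…,N}, and define the map E° : 2^V → ℤ ∪ {−∞} by E°(X) = −|O_X| if |X| is even and E°(X) = −∞ if |X| is odd (i.e., E° is the negative of the odd-dissimilarity map). Then E° is a valuated Δ-matroid: for all X, Y ⊆ V and every i ∈ X △ Y, E°(X) + E°(Y) ≤ max_{j ∈ (X △ Y) ∖ {i}} ( E°(X △ {i,j}) + E°(Y △ {i,j}) ), where △ denotes symmetric difference, addition in ℤ ∪ {−∞} satisfies a + (−∞) = −∞, and the maximum over the empty set is −∞. -/

import Mathlib

/-! For `X` of even size, an edge `uv` is odd exactly when the side of `u` meets `X` in an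
odd number of vertices; this parity is additive, so `O_{X ∆ Y} = O_X ∆ O_Y` for even `X`, `Y`.
For `i ∈ Z = X ∆ Y`, the vertices of odd degree in the graph of odd edges of `Z` are exactly
the elements of `Z`, so by the handshake lemma in the component of `i` there is another
`j ∈ Z` joined to `i` by odd edges of `Z`. Every odd edge of `{i, j}` separates `i` from `j`,
hence lies on that walk: `O_{i,j} ⊆ O_X ∆ O_Y`. For such a `P`,
`|O_X ∆ O_P| + |O_Y ∆ O_P| = |O_X| + |O_Y|`, so the exchange inequality holds with equality
at `j`. -/

open scoped Classical symmDiff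

/-- An edge `e` of `T` is odd w.r.t. `X` if each of the two components of
`T − e` contains an odd number of vertices of `X`. -/
def OddEdge {N : ℕ} (T : SimpleGraph (Fin N)) (X : Finset (Fin N)) (e : Sym2 (Fin N)) : Prop :=
  e ∈ T.edgeSet ∧
    ∀ u ∈ e, Odd {x : Fin N | x ∈ X ∧ (T.deleteEdges {e}).Reachable u x}.ncard

/-- The negative of the odd-dissimilarity map of a tree:
`E°(X) = −|O_X|` if `|X|` is even and `−∞` otherwise, in `ℤ ∪ {−∞}`. -/
noncomputable def negOddDissimilarity {N : ℕ} (T : SimpleGraph (Fin N))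
    (X : Finset (Fin N)) : WithBot ℤ :=
  if Even X.card then ((-({e | OddEdge T X e}.ncard : ℤ) : ℤ) : WithBot ℤ) else ⊥

open Finset

namespace Finset

variable {α : Type*} [DecidableEq α]

theorem card_symmDiff_add_two_mul_card_inter (s t : Finset α) :
    #(s ∆ t) + 2 * #(s ∩ t) = #s + #t := by
  have hsd : #(s ∆ t) = #(s \ t) + #(t \ s) :=
    card_union_of_disjoint disjoint_sdiff_sdiff
  have hs := card_sdiff_add_card_inter s t
  have ht := card_sdiff_add_card_inter t s
  rw [inter_comm] at ht
  omega

theorem even_card_symmDiff_iff (s t : Finset α) :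
    Even #(s ∆ t) ↔ (Even #s ↔ Even #t) := by
  have := card_symmDiff_add_two_mul_card_inter s t
  simp only [Nat.even_iff]
  omega

theorem odd_card_symmDiff_iff (s t : Finset α) :
    Odd #(s ∆ t) ↔ ¬(Odd #s ↔ Odd #t) := by
  have := card_symmDiff_add_two_mul_card_inter s t
  simp only [Nat.odd_iff]
  omega

theorem filter_symmDiff (p : α → Prop) [DecidablePred p] (s t : Finset α) :
    (s ∆ t).filter p = s.filter p ∆ t.filter p := by
  ext a
  simp only [mem_filter, mem_symmDiff]
  tauto

theorem card_symmDiff_add_card_symmDiff_of_subset {A B P : Finset α} (hP : P ⊆ A ∆ B) :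
    #(A ∆ P) + #(B ∆ P) = #A + #B := by
  have hsplit : ∀ x ∈ P, (x ∈ A ↔ x ∉ B) := fun x hx => by
    have := mem_symmDiff.1 (hP hx); tauto
  have hunion : A ∩ P ∪ B ∩ P = P := by
    ext x; have := hsplit x; simp only [mem_union, mem_inter]; tauto
  have hinter : A ∩ P ∩ (B ∩ P) = ∅ := by
    ext x; have := hsplit x; simp only [mem_inter, notMem_empty, iff_false]; tauto
  have hcard := card_union_add_card_inter (A ∩ P) (B ∩ P)
  rw [hunion, hinter, card_empty] at hcard
  have hA := card_symmDiff_add_two_mul_card_inter A P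
  have hB := card_symmDiff_add_two_mul_card_inter B P
  omega

end Finset

namespace SimpleGraph

variable {V : Type*} {G : SimpleGraph V} {u v w w' x : V}

theorem IsAcyclic.not_reachable_deleteEdges_of_adj (hG : G.IsAcyclic) (h : G.Adj u v) :
    ¬(G.deleteEdges {s(u, v)}).Reachable u v :=
  isBridge_iff.1 (isAcyclic_iff_forall_adj_isBridge.1 hG h)

theorem Walk.IsPath.reachable_deleteEdges_snd {p : G.Walk v x} (hp : p.IsPath) (hnil : ¬p.Nil) :
    (G.deleteEdges {s(v, p.snd)}).Reachable p.snd x := by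
  cases p with
  | nil => exact absurd Walk.Nil.nil hnil
  | cons h q =>
    rw [Walk.cons_isPath_iff] at hp
    rw [Walk.snd_cons]
    exact reachable_deleteEdges_iff_exists_walk.2
      ⟨q, fun he => hp.2 (q.fst_mem_support_of_mem_edges he)⟩

theorem Preconnected.exists_adj_reachable_deleteEdges (hG : G.Preconnected) (hx : x ≠ v) :
    ∃ w, G.Adj v w ∧ (G.deleteEdges {s(v, w)}).Reachable w x := by
  obtain ⟨p, hp⟩ := (hG v x).exists_isPath
  have hnil : ¬p.Nil := fun h => hx (h.eq).symm
  exact ⟨p.snd, p.adj_snd hnil, hp.reachable_deleteEdges_snd hnil⟩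

theorem Preconnected.reachable_deleteEdges_or (hG : G.Preconnected) (u v x : V) :
    (G.deleteEdges {s(u, v)}).Reachable u x ∨ (G.deleteEdges {s(u, v)}).Reachable v x := by
  obtain ⟨p, hp⟩ := (hG u x).exists_isPath
  by_cases huv : s(u, v) ∈ p.edges
  · have hnil : ¬p.Nil := Walk.edges_eq_nil.not.1 (List.ne_nil_of_mem huv)
    right
    rw [hp.eq_snd_of_mem_edges huv]
    exact hp.reachable_deleteEdges_snd hnil
  · exact Or.inl (reachable_deleteEdges_iff_exists_walk.2 ⟨p, huv⟩)

theorem IsAcyclic.eq_of_reachable_deleteEdges (hG : G.IsAcyclic) (hw : G.Adj v w)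
    (hw' : G.Adj v w') (hx : (G.deleteEdges {s(v, w)}).Reachable w x)
    (hx' : (G.deleteEdges {s(v, w')}).Reachable w' x) : w = w' := by
  obtain ⟨p, hp⟩ := (hw.reachable.trans (hx.mono (deleteEdges_le _))).exists_isPath
  have hmem : ∀ {y}, G.Adj v y → (G.deleteEdges {s(v, y)}).Reachable y x →
      s(v, y) ∈ p.edges :=
    fun hvy hyx => p.mem_edges_of_not_reachable_deleteEdges fun hvx =>
      hG.not_reachable_deleteEdges_of_adj hvy (hvx.trans hyx.symm)
  rw [hp.eq_snd_of_mem_edges (hmem hw hx), hp.eq_snd_of_mem_edges (hmem hw' hx')]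

theorem IsTree.card_filter_reachable_deleteEdges_add
    [DecidableRel (G.deleteEdges {s(u, v)}).Reachable] (hG : G.IsTree) (h : G.Adj u v)
    (X : Finset V) :
    #{x ∈ X | (G.deleteEdges {s(u, v)}).Reachable u x} +
      #{x ∈ X | (G.deleteEdges {s(u, v)}).Reachable v x} = #X := by
  rw [← card_filter_add_card_filter_not (s := X)
    (fun x => (G.deleteEdges {s(u, v)}).Reachable u x)]
  congr 2
  refine filter_congr fun x _ => ⟨fun hv hu => ?_, fun hu => ?_⟩
  · exact hG.isAcyclic.not_reachable_deleteEdges_of_adj h (hu.trans hv.symm)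
  · exact (hG.connected.preconnected.reachable_deleteEdges_or u v x).resolve_left hu

theorem IsTree.sum_card_filter_reachable_deleteEdges [Fintype (G.neighborSet v)]
    [DecidableEq V] [∀ w, DecidableRel (G.deleteEdges {s(v, w)}).Reachable] (hG : G.IsTree)
    (X : Finset V) :
    ∑ w ∈ G.neighborFinset v, #{x ∈ X | (G.deleteEdges {s(v, w)}).Reachable w x} =
      #(X.erase v) := by
  rw [← card_biUnion]
  · congr 1
    ext x
    simp only [mem_biUnion, mem_filter, mem_erase, mem_neighborFinset]
    constructor
    · rintro ⟨w, hw, hxX, hx⟩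
      refine ⟨?_, hxX⟩
      rintro rfl
      exact hG.isAcyclic.not_reachable_deleteEdges_of_adj hw hx.symm
    · rintro ⟨hxv, hxX⟩
      obtain ⟨w, hw, hx⟩ := hG.connected.preconnected.exists_adj_reachable_deleteEdges hxv
      exact ⟨w, hw, hxX, hx⟩
  · intro w hw w' hw' hne
    simp only [coe_neighborFinset, mem_neighborSet] at hw hw'
    rw [Function.onFun, Finset.disjoint_left]
    rintro x hx hx'
    rw [mem_filter] at hx hx'
    exact hne (hG.isAcyclic.eq_of_reachable_deleteEdges hw hw' hx.2 hx'.2)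

theorem exists_ne_reachable_odd_degree [Fintype V] [DecidableRel G.Adj] {v : V}
    (hv : Odd (G.degree v)) : ∃ w, w ≠ v ∧ G.Reachable v w ∧ Odd (G.degree w) := by
  set s : Set V := {w | G.Reachable v w}
  have hs (w : s) : G.neighborSet w ⊆ s := fun _ hw => w.2.trans hw.reachable
  obtain ⟨w, hne, hw⟩ := (G.induce s).exists_ne_odd_degree_of_exists_odd_degree
    ⟨v, Reachable.refl v⟩ (by rwa [degree_induce_of_neighborSet_subset (hs _)])
  refine ⟨w, fun h => hne (Subtype.ext h), w.2, ?_⟩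
  rwa [degree_induce_of_neighborSet_subset (hs w)] at hw

end SimpleGraph

open SimpleGraph

section OddEdges

variable {N : ℕ} {T : SimpleGraph (Fin N)}

theorem oddEdge_mk_iff (hT : T.IsTree) {u v : Fin N} (h : T.Adj u v) {X : Finset (Fin N)}
    (hX : Even #X) :
    OddEdge T X s(u, v) ↔ Odd #{x ∈ X | (T.deleteEdges {s(u, v)}).Reachable u x} := by
  have hsum := hT.card_filter_reachable_deleteEdges_add h X
  have hside (w : Fin N) : {x | x ∈ X ∧ (T.deleteEdges {s(u, v)}).Reachable w x}.ncard =
      #{x ∈ X | (T.deleteEdges {s(u, v)}).Reachable w x} := by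
    rw [← coe_filter, Set.ncard_coe_finset]
  simp only [OddEdge, hside, Sym2.mem_iff, forall_eq_or_imp, forall_eq, mem_edgeSet, h,
    true_and]
  rw [Nat.even_iff] at hX
  simp only [Nat.odd_iff]
  omega

noncomputable def oddEdges (T : SimpleGraph (Fin N)) (X : Finset (Fin N)) :
    Finset (Sym2 (Fin N)) :=
  univ.filter (OddEdge T X)

theorem negOddDissimilarity_of_even {X : Finset (Fin N)} (hX : Even #X) :
    negOddDissimilarity T X = ((-#(oddEdges T X) : ℤ) : WithBot ℤ) := by
  rw [negOddDissimilarity, if_pos hX, oddEdges, ← coe_filter_univ, Set.ncard_coe_finset]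

theorem oddEdges_symmDiff (hT : T.IsTree) {X Y : Finset (Fin N)} (hX : Even #X)
    (hY : Even #Y) : oddEdges T (X ∆ Y) = oddEdges T X ∆ oddEdges T Y := by
  have hXY : Even #(X ∆ Y) := (even_card_symmDiff_iff X Y).2 (iff_of_true hX hY)
  ext e
  induction e using Sym2.ind with
  | _ u v =>
  simp only [oddEdges, mem_symmDiff, mem_filter, mem_univ, true_and]
  by_cases h : T.Adj u v
  · rw [oddEdge_mk_iff hT h hX, oddEdge_mk_iff hT h hY, oddEdge_mk_iff hT h hXY,
      filter_symmDiff, odd_card_symmDiff_iff]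
    tauto
  · have hnot : ∀ Z, ¬OddEdge T Z s(u, v) := fun Z he => h he.1
    simp only [hnot, false_and, or_self]

noncomputable def oddEdgeGraph (T : SimpleGraph (Fin N)) (Z : Finset (Fin N)) :
    SimpleGraph (Fin N) :=
  fromEdgeSet {e | OddEdge T Z e}

theorem oddEdgeGraph_adj {Z : Finset (Fin N)} {v w : Fin N} :
    (oddEdgeGraph T Z).Adj v w ↔ OddEdge T Z s(v, w) := by
  rw [oddEdgeGraph, fromEdgeSet_adj, Set.mem_ofPred_eq, and_iff_left_iff_imp]
  exact fun he => T.ne_of_adj he.1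

theorem oddEdgeGraph_le (Z : Finset (Fin N)) : oddEdgeGraph T Z ≤ T :=
  fun _ _ h => (oddEdgeGraph_adj.1 h).1

theorem odd_degree_oddEdgeGraph_iff (hT : T.IsTree) {Z : Finset (Fin N)} (hZ : Even #Z)
    (v : Fin N) : Odd ((oddEdgeGraph T Z).degree v) ↔ v ∈ Z := by
  have hnbr : (oddEdgeGraph T Z).neighborFinset v =
      {w ∈ T.neighborFinset v | Odd #{x ∈ Z | (T.deleteEdges {s(v, w)}).Reachable w x}} := by
    ext w
    rw [mem_neighborFinset, mem_filter, mem_neighborFinset, oddEdgeGraph_adj]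
    have hswap (h : T.Adj v w) :
        OddEdge T Z s(v, w) ↔ Odd #{x ∈ Z | (T.deleteEdges {s(v, w)}).Reachable w x} := by
      have := oddEdge_mk_iff hT h.symm hZ
      rwa [Sym2.eq_swap] at this
    exact ⟨fun he => ⟨he.1, (hswap he.1).1 he⟩, fun ⟨h, hodd⟩ => (hswap h).2 hodd⟩
  rw [← card_neighborFinset_eq_degree, hnbr, ← odd_sum_iff_odd_card_odd,
    hT.sum_card_filter_reachable_deleteEdges]
  by_cases hv : v ∈ Z
  · have := card_erase_add_one hv
    simp only [hv, iff_true, Nat.odd_iff]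
    rw [Nat.even_iff] at hZ
    omega
  · simpa [erase_eq_of_notMem hv, hv] using hZ

theorem OddEdge.not_reachable_deleteEdges_of_pair {i j : Fin N} (hij : i ≠ j)
    {e : Sym2 (Fin N)} (he : OddEdge T {i, j} e) : ¬(T.deleteEdges {e}).Reachable i j := by
  intro hR
  have hodd := he.2 _ e.out_fst_mem
  rw [← coe_filter, Set.ncard_coe_finset] at hodd
  by_cases hi : (T.deleteEdges {e}).Reachable e.out.1 i
  · rw [filter_true_of_mem (by simp [hi, hi.trans hR]), card_pair hij] at hodd
    exact Nat.not_odd_iff_even.2 even_two hodd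
  · have hj : ¬(T.deleteEdges {e}).Reachable e.out.1 j := fun h => hi (h.trans hR.symm)
    rw [filter_false_of_mem (by simp [hi, hj])] at hodd
    simp at hodd

theorem oddEdges_pair_subset {Z : Finset (Fin N)} {i j : Fin N} (hij : i ≠ j)
    (hR : (oddEdgeGraph T Z).Reachable i j) : oddEdges T {i, j} ⊆ oddEdges T Z := by
  intro e he
  simp only [oddEdges, mem_filter, mem_univ, true_and] at he ⊢
  obtain ⟨W⟩ := hR
  have hsep : ¬((oddEdgeGraph T Z).deleteEdges {e}).Reachable i j := fun h =>
    he.not_reachable_deleteEdges_of_pair hij (h.mono (deleteEdges_mono (oddEdgeGraph_le Z)))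
  have := W.edges_subset_edgeSet (W.mem_edges_of_not_reachable_deleteEdges hsep)
  rw [oddEdgeGraph, edgeSet_fromEdgeSet] at this
  exact this.1

theorem negOddDissimilarity_symmDiff_add_symmDiff (hT : T.IsTree) {X Y P : Finset (Fin N)}
    (hX : Even #X) (hY : Even #Y) (hP : Even #P)
    (hsub : oddEdges T P ⊆ oddEdges T (X ∆ Y)) :
    negOddDissimilarity T (X ∆ P) + negOddDissimilarity T (Y ∆ P) =
      negOddDissimilarity T X + negOddDissimilarity T Y := by
  rw [oddEdges_symmDiff hT hX hY] at hsub
  have hcard := card_symmDiff_add_card_symmDiff_of_subset hsub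
  rw [negOddDissimilarity_of_even ((even_card_symmDiff_iff X P).2 (iff_of_true hX hP)),
    negOddDissimilarity_of_even ((even_card_symmDiff_iff Y P).2 (iff_of_true hY hP)),
    negOddDissimilarity_of_even hX, negOddDissimilarity_of_even hY,
    oddEdges_symmDiff hT hX hP, oddEdges_symmDiff hT hY hP, ← WithBot.coe_add,
    ← WithBot.coe_add]
  congr 1
  omega

end OddEdges

/-- **The negative odd-dissimilarity map is a valuated Δ-matroid**: it
satisfies the tropical Wick exchange axiom. -/
theorem negOddDissimilarity_valuated_delta_matroid (N : ℕ)
    (T : SimpleGraph (Fin N)) (hT : T.IsTree) (X Y : Finset (Fin N)) (i : Fin N)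
    (hi : i ∈ X ∆ Y) :
    negOddDissimilarity T X + negOddDissimilarity T Y ≤
      ((X ∆ Y).erase i).sup fun j =>
        negOddDissimilarity T (X ∆ {i, j}) + negOddDissimilarity T (Y ∆ {i, j}) := by
  by_cases hX : Even #X
  swap
  · simp [negOddDissimilarity, hX]
  by_cases hY : Even #Y
  swap
  · simp [negOddDissimilarity, hY]
  have hZ : Even #(X ∆ Y) := (even_card_symmDiff_iff X Y).2 (iff_of_true hX hY)
  obtain ⟨j, hji, hR, hj⟩ :=
    exists_ne_reachable_odd_degree ((odd_degree_oddEdgeGraph_iff hT hZ i).2 hi)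
  have hjZ : j ∈ (X ∆ Y).erase i :=
    mem_erase.2 ⟨hji, (odd_degree_oddEdgeGraph_iff hT hZ j).1 hj⟩
  have hpair : Even #{i, j} := by rw [card_pair hji.symm]; exact even_two
  exact le_sup_of_le hjZ (negOddDissimilarity_symmDiff_add_symmDiff hT hX hY hpair
    (oddEdges_pair_subset hji.symm hR)).ge
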